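/- arXiv:0804.3184 — 3 statements merged into one kernel-verified Lean document; each statement's English description precedes it below -/
import Mathlib

section
/- For nonnegative integers a, b and a formal variable X, the function f(z) = (X−z)^a ((X−z̄)/(z−z̄))^b of weight w = b − a satisfies δ_w f = −a (X−z)^{a−1} ((X−z̄)/(z−z̄))^{b+1}, δ_w⁻ f = b (X−z)^{a+1} ((X−z̄)/(z−z̄))^{b−1}, and Δ_w f = −b(a+1) f. -/
open Complex ComplexConjugate

/-- The Wirtinger derivative `∂f/∂z = (∂f/∂x − i ∂f/∂y)/2`. -/
noncomputable def wirtingerZ (f : ℂ → ℂ) (z : ℂ) : ℂ :=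
  (fderiv ℝ f z 1 - Complex.I * fderiv ℝ f z Complex.I) / 2

/-- The Wirtinger derivative `∂f/∂z̄ = (∂f/∂x + i ∂f/∂y)/2`. -/
noncomputable def wirtingerZbar (f : ℂ → ℂ) (z : ℂ) : ℂ :=
  (fderiv ℝ f z 1 + Complex.I * fderiv ℝ f z Complex.I) / 2

/-- The raising operator `δ_w f = ∂f/∂z + (w/(z−z̄)) f`. -/
noncomputable def deltaOp (w : ℤ) (f : ℂ → ℂ) (z : ℂ) : ℂ :=
  wirtingerZ f z + (w : ℂ) / (z - conj z) * f z

/-- The lowering operator `δ_w⁻ f = (z−z̄)² ∂f/∂z̄`. -/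
noncomputable def deltaMinusOp (f : ℂ → ℂ) (z : ℂ) : ℂ :=
  (z - conj z) ^ 2 * wirtingerZbar f z

/-- The Laplacian `Δ_w f = (z−z̄)² ∂²f/∂z∂z̄ + w(z−z̄) ∂f/∂z̄`. -/
noncomputable def laplacianOp (w : ℤ) (f : ℂ → ℂ) (z : ℂ) : ℂ :=
  (z - conj z) ^ 2 * wirtingerZ (fun z' => wirtingerZbar f z') z +
    (w : ℂ) * (z - conj z) * wirtingerZbar f z

/-!
Write `f_{a,b}` for `(X − z)^a ((X − z̄)/(z − z̄))^b`. The Wirtinger derivatives of `f_{a,b}`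
follow from the product and chain rules, which give `δ_w f_{a,b}` and
`δ⁻ f_{a,b} = b f_{a+1,b-1}` directly. For the Laplacian, the operator identity
`Δ_w = δ_{w-2} ∘ δ⁻_w` reduces `Δ_w f_{a,b}` to `b · δ_{w-2} f_{a+1,b-1}`, which is again
an instance of the raising formula.
-/

noncomputable def wirtingerCLM (p q : ℂ) : ℂ →L[ℝ] ℂ :=
  p • ContinuousLinearMap.id ℝ ℂ + q • (conjCLE : ℂ →L[ℝ] ℂ)

@[simp]
lemma wirtingerCLM_apply (p q v : ℂ) : wirtingerCLM p q v = p * v + q * conj v := rfl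

/-- `f` is real differentiable at `z` with `∂f/∂z = p` and `∂f/∂z̄ = q`. -/
def HasWirtingerAt (f : ℂ → ℂ) (p q z : ℂ) : Prop :=
  HasFDerivAt f (wirtingerCLM p q) z

lemma natCast_mul_pow_sub_one_mul {R : Type*} [Semiring R] (n : ℕ) (x : R) :
    (n : R) * (x ^ (n - 1) * x) = n * x ^ n := by
  cases n <;> simp [pow_succ]

lemma sub_conj_ne_zero {z : ℂ} (hz : z.im ≠ 0) : z - conj z ≠ 0 :=
  sub_ne_zero.2 fun h => hz (conj_eq_iff_im.1 h.symm)

section WirtingerCalculus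

variable {f g : ℂ → ℂ} {p q p' q' z : ℂ}

lemma HasFDerivAt.hasWirtingerAt {L : ℂ →L[ℝ] ℂ} (h : HasFDerivAt f L z)
    (hL : ∀ v, L v = p * v + q * conj v) : HasWirtingerAt f p q z := by
  rwa [HasWirtingerAt, show wirtingerCLM p q = L from ContinuousLinearMap.ext fun v => (hL v).symm]

lemma HasDerivAt.comp_hasWirtingerAt {φ : ℂ → ℂ} {d : ℂ} (hφ : HasDerivAt φ d (f z))
    (hf : HasWirtingerAt f p q z) : HasWirtingerAt (fun x => φ (f x)) (d * p) (d * q) z :=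
  ((hφ.hasFDerivAt.restrictScalars ℝ).comp z hf).hasWirtingerAt fun v => by simp; ring

lemma hasWirtingerAt_const (c z : ℂ) : HasWirtingerAt (fun _ => c) 0 0 z :=
  (hasFDerivAt_const c z).hasWirtingerAt fun v => by simp

lemma hasWirtingerAt_id (z : ℂ) : HasWirtingerAt id 1 0 z :=
  (hasFDerivAt_id z).hasWirtingerAt fun v => by simp

lemma hasWirtingerAt_conj (z : ℂ) : HasWirtingerAt conj 0 1 z :=
  (conjCLE : ℂ →L[ℝ] ℂ).hasFDerivAt.hasWirtingerAt fun v => by simp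

namespace HasWirtingerAt

lemma wirtingerZ_eq (h : HasWirtingerAt f p q z) : wirtingerZ f z = p := by
  rw [wirtingerZ, h.fderiv]
  simp only [wirtingerCLM_apply, conj_I, map_one]
  linear_combination (q - p) / 2 * I_mul_I

lemma wirtingerZbar_eq (h : HasWirtingerAt f p q z) : wirtingerZbar f z = q := by
  rw [wirtingerZbar, h.fderiv]
  simp only [wirtingerCLM_apply, conj_I, map_one]
  linear_combination (p - q) / 2 * I_mul_I

lemma deltaOp_eq (w : ℤ) (h : HasWirtingerAt f p q z) :
    deltaOp w f z = p + w / (z - conj z) * f z := by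
  rw [deltaOp, h.wirtingerZ_eq]

lemma congr_of_eventuallyEq (h : HasWirtingerAt f p q z) (hfg : g =ᶠ[nhds z] f) :
    HasWirtingerAt g p q z :=
  HasFDerivAt.congr_of_eventuallyEq h hfg

lemma congr_deriv (h : HasWirtingerAt f p q z) (hp : p = p') (hq : q = q') :
    HasWirtingerAt f p' q' z :=
  hp ▸ hq ▸ h

lemma sub (hf : HasWirtingerAt f p q z) (hg : HasWirtingerAt g p' q' z) :
    HasWirtingerAt (fun x => f x - g x) (p - p') (q - q') z :=
  HasFDerivAt.hasWirtingerAt (HasFDerivAt.sub hf hg) fun v => by simp; ring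

lemma mul (hf : HasWirtingerAt f p q z) (hg : HasWirtingerAt g p' q' z) :
    HasWirtingerAt (fun x => f x * g x) (p * g z + f z * p') (q * g z + f z * q') z :=
  HasFDerivAt.hasWirtingerAt (HasFDerivAt.mul hf hg) fun v => by simp; ring

lemma const_mul (c : ℂ) (hf : HasWirtingerAt f p q z) :
    HasWirtingerAt (fun x => c * f x) (c * p) (c * q) z := by
  simpa using ((hasDerivAt_id (f z)).const_mul c).comp_hasWirtingerAt hf

lemma pow (hf : HasWirtingerAt f p q z) (n : ℕ) :
    HasWirtingerAt (fun x => f x ^ n) (n * f z ^ (n - 1) * p) (n * f z ^ (n - 1) * q) z :=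
  (hasDerivAt_pow n (f z)).comp_hasWirtingerAt hf

lemma div (hf : HasWirtingerAt f p q z) (hg : HasWirtingerAt g p' q' z) (hgz : g z ≠ 0) :
    HasWirtingerAt (fun x => f x / g x) ((p * g z - f z * p') / g z ^ 2)
      ((q * g z - f z * q') / g z ^ 2) z := by
  have hinv := (hasDerivAt_inv hgz).comp_hasWirtingerAt hg
  simp only [div_eq_mul_inv]
  refine (hf.mul hinv).congr_deriv ?_ ?_ <;> field_simp <;> ring

end HasWirtingerAt

lemma hasWirtingerAt_sub_conj (z : ℂ) : HasWirtingerAt (fun x => x - conj x) 1 (-1) z :=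
  ((hasWirtingerAt_id z).sub (hasWirtingerAt_conj z)).congr_deriv (sub_zero 1) (zero_sub 1)

lemma laplacianOp_eq_deltaOp_deltaMinusOp (w : ℤ) (hz : z.im ≠ 0)
    (h : HasWirtingerAt (deltaMinusOp f) p q z) :
    laplacianOp w f z = deltaOp (w - 2) (deltaMinusOp f) z := by
  have hy := sub_conj_ne_zero hz
  have hbar : (fun x => wirtingerZbar f x) =ᶠ[nhds z]
      fun x => deltaMinusOp f x / (x - conj x) ^ 2 := by
    filter_upwards [continuous_im.continuousAt.eventually_ne hz] with x hx
    rw [deltaMinusOp, mul_div_cancel_left₀ _ (pow_ne_zero 2 (sub_conj_ne_zero hx))]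
  have hg := (h.div ((hasWirtingerAt_sub_conj z).pow 2) (pow_ne_zero 2 hy)).congr_of_eventuallyEq
    hbar
  rw [laplacianOp, hg.wirtingerZ_eq, h.deltaOp_eq, deltaMinusOp]
  push_cast
  field_simp
  ring

end WirtingerCalculus

noncomputable def conjRatio (X z : ℂ) : ℂ := (X - conj z) / (z - conj z)

noncomputable def weightForm (a b : ℕ) (X z : ℂ) : ℂ := (X - z) ^ a * conjRatio X z ^ b

section WeightForm

variable {z : ℂ} (X : ℂ)

lemma conjRatio_eq_one_add (hz : z.im ≠ 0) : conjRatio X z = 1 + (X - z) / (z - conj z) := by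
  have := sub_conj_ne_zero hz
  rw [conjRatio]
  field_simp
  ring

lemma hasWirtingerAt_conjRatio (hz : z.im ≠ 0) :
    HasWirtingerAt (conjRatio X) (-conjRatio X z / (z - conj z))
      ((X - z) / (z - conj z) ^ 2) z := by
  have hy := sub_conj_ne_zero hz
  refine (((hasWirtingerAt_const X z).sub (hasWirtingerAt_conj z)).div
    (hasWirtingerAt_sub_conj z) hy).congr_deriv ?_ ?_
  · rw [conjRatio]; field_simp; ring
  · field_simp; ring

lemma hasWirtingerAt_weightForm (a b : ℕ) (hz : z.im ≠ 0) :
    HasWirtingerAt (weightForm a b X)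
      (-(a : ℂ) * (X - z) ^ (a - 1) * conjRatio X z ^ b -
        b * (X - z) ^ a * conjRatio X z ^ b / (z - conj z))
      (b * (X - z) ^ (a + 1) * conjRatio X z ^ (b - 1) / (z - conj z) ^ 2) z := by
  refine ((((hasWirtingerAt_const X z).sub (hasWirtingerAt_id z)).pow a).mul
    ((hasWirtingerAt_conjRatio X hz).pow b)).congr_deriv ?_ ?_
  · simp only [id]
    linear_combination (-(X - z) ^ a / (z - conj z)) * natCast_mul_pow_sub_one_mul b (conjRatio X z)
  · simp only [id]
    ring

lemma deltaOp_weightForm (a b : ℕ) (hz : z.im ≠ 0) :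
    deltaOp ((b : ℤ) - a) (weightForm a b X) z =
      -(a : ℂ) * (X - z) ^ (a - 1) * conjRatio X z ^ (b + 1) := by
  rw [(hasWirtingerAt_weightForm X a b hz).deltaOp_eq, weightForm]
  push_cast
  linear_combination (a * (X - z) ^ (a - 1) * conjRatio X z ^ b) * conjRatio_eq_one_add X hz +
    (conjRatio X z ^ b / (z - conj z)) * natCast_mul_pow_sub_one_mul a (X - z)

lemma deltaMinusOp_weightForm (a b : ℕ) (hz : z.im ≠ 0) :
    deltaMinusOp (weightForm a b X) z = b * (X - z) ^ (a + 1) * conjRatio X z ^ (b - 1) := by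
  have := sub_conj_ne_zero hz
  rw [deltaMinusOp, (hasWirtingerAt_weightForm X a b hz).wirtingerZbar_eq]
  field_simp

lemma deltaMinusOp_weightForm_eventuallyEq (a b : ℕ) (hz : z.im ≠ 0) :
    deltaMinusOp (weightForm a b X) =ᶠ[nhds z] fun x => b * weightForm (a + 1) (b - 1) X x := by
  filter_upwards [continuous_im.continuousAt.eventually_ne hz] with x hx
  rw [deltaMinusOp_weightForm X a b hx, weightForm, mul_assoc]

lemma laplacianOp_weightForm (a b : ℕ) (hz : z.im ≠ 0) :
    laplacianOp ((b : ℤ) - a) (weightForm a b X) z = -(b : ℂ) * (a + 1) * weightForm a b X z := by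
  have hlow := deltaMinusOp_weightForm_eventuallyEq X a b hz
  have h := ((hasWirtingerAt_weightForm X (a + 1) (b - 1) hz).const_mul b).congr_of_eventuallyEq
    hlow
  rw [laplacianOp_eq_deltaOp_deltaMinusOp _ hz h, h.deltaOp_eq, hlow.eq_of_nhds]
  obtain _ | k := b
  · simp
  · have hraise := deltaOp_weightForm X (a + 1) k hz
    rw [(hasWirtingerAt_weightForm X (a + 1) k hz).deltaOp_eq] at hraise
    simp only [Nat.add_sub_cancel, weightForm] at hraise ⊢
    push_cast at hraise ⊢
    linear_combination ((k : ℂ) + 1) * hraise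

end WeightForm

/-- for `f(z) = (X−z)^a ((X−z̄)/(z−z̄))^b` of weight `w = b − a` one has
`δ_w f = −a (X−z)^{a−1} ((X−z̄)/(z−z̄))^{b+1}`,
`δ_w⁻ f = b (X−z)^{a+1} ((X−z̄)/(z−z̄))^{b−1}`, and `Δ_w f = −b(a+1) f`. -/
theorem statement1 (a b : ℕ) (X : ℂ) (z : ℂ) (hz : 0 < z.im) :
    deltaOp ((b : ℤ) - a) (fun z' => (X - z') ^ a * ((X - conj z') / (z' - conj z')) ^ b) z =
      -(a : ℂ) * (X - z) ^ (a - 1) * ((X - conj z) / (z - conj z)) ^ (b + 1) ∧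
    deltaMinusOp (fun z' => (X - z') ^ a * ((X - conj z') / (z' - conj z')) ^ b) z =
      (b : ℂ) * (X - z) ^ (a + 1) * ((X - conj z) / (z - conj z)) ^ (b - 1) ∧
    laplacianOp ((b : ℤ) - a)
        (fun z' => (X - z') ^ a * ((X - conj z') / (z' - conj z')) ^ b) z =
      -(b : ℂ) * ((a : ℂ) + 1) * ((X - z) ^ a * ((X - conj z) / (z - conj z)) ^ b) :=
  ⟨deltaOp_weightForm X a b hz.ne', deltaMinusOp_weightForm X a b hz.ne',
    laplacianOp_weightForm X a b hz.ne'⟩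
end

section
/- Fix an integer k ≥ 1 and z in the upper half plane. For −(k−1) ≤ l ≤ k−1 define the polynomial P_l(X) = (−1)^l ((k−1)!/(k−l−1)!) (X−z)^{k−1−l} ((X−z̄)/(z−z̄))^{k−1+l} of degree 2k−2. Let (p, p') = Σ_{i=0}^{2k−2} (−1)^i p_i p'_{2k−2−i} / C(2k−2, i) be the standard invariant pairing on polynomials of degree ≤ 2k−2 (p_i the coefficient of X^i). Then (P_i, P_j) = 0 whenever i + j ≠ 0, and (P_i, P_{−i}) = (−1)^{k−1−i} C(2k−2, k−1)^{−1}. -/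
open Complex ComplexConjugate

/-- The polynomial `P_l(X) = (−1)^l ((k−1)!/(k−l−1)!) (X−z)^{k−1−l} ((X−z̄)/(z−z̄))^{k−1+l}`
for `−(k−1) ≤ l ≤ k−1`. -/
noncomputable def Ppoly (k : ℕ) (z : ℂ) (l : ℤ) : Polynomial ℂ :=
  Polynomial.C ((-1 : ℂ) ^ l * (Nat.factorial (k - 1) : ℂ) /
      (Nat.factorial ((k : ℤ) - l - 1).toNat : ℂ)) *
    (Polynomial.X - Polynomial.C z) ^ ((k : ℤ) - 1 - l).toNat *
    (Polynomial.C ((z - conj z)⁻¹) * (Polynomial.X - Polynomial.C (conj z))) ^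
      ((k : ℤ) - 1 + l).toNat

/-- The standard invariant pairing
`(p, p') = Σ_{i=0}^{2k−2} (−1)^i p_i p'_{2k−2−i} / C(2k−2, i)`
on polynomials of degree ≤ 2k−2. -/
noncomputable def pairV (k : ℕ) (p q : Polynomial ℂ) : ℂ :=
  ∑ i ∈ Finset.range (2 * k - 1),
    (-1 : ℂ) ^ i * p.coeff i * q.coeff (2 * k - 2 - i) / (Nat.choose (2 * k - 2) i : ℂ)

/-!
Multiplication by `X - b` is adjoint, up to the factor `-1/(n+1)`, to the lowering operator
`q ↦ (n+1) q - (X - b) q'`, which sends `(X - a)^u (X - b)^v` to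
`u (b - a) (X - a)^(u-1) (X - b)^v`.
Moving the `k-1+i` factors `X - z̄` of `P_i` across the pairing this way leaves the pairing of
`(X - z)^(k-1-i)` with some `q`, which is `(-1)^(k-1-i) q(z)`. Hence `(P_i, P_j)` vanishes unless
`P_j` has exactly `k-1+i` factors `X - z`, i.e. `j = -i`.
-/

open Polynomial Finset Nat

theorem coeff_X_mul_derivative {R : Type*} [CommSemiring R] (q : R[X]) (n : ℕ) :
    (X * derivative q).coeff n = n * q.coeff n := by
  cases n with
  | zero => simp
  | succ n => rw [coeff_X_mul, coeff_derivative]; push_cast; ring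

variable {K : Type*} [Field K]

noncomputable def invariantPairing (n : ℕ) (p q : K[X]) : K :=
  ∑ i ∈ range (n + 1), (-1) ^ i * p.coeff i * q.coeff (n - i) / (n.choose i : K)

theorem invariantPairing_C_mul_left (n : ℕ) (c : K) (p q : K[X]) :
    invariantPairing n (C c * p) q = c * invariantPairing n p q := by
  simp only [invariantPairing, mul_sum, coeff_C_mul]
  exact sum_congr rfl fun _ _ ↦ by ring

theorem invariantPairing_C_mul_right (n : ℕ) (c : K) (p q : K[X]) :
    invariantPairing n p (C c * q) = c * invariantPairing n p q := by
  simp only [invariantPairing, mul_sum, coeff_C_mul]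
  exact sum_congr rfl fun _ _ ↦ by ring

theorem invariantPairing_sub_left (n : ℕ) (p₁ p₂ q : K[X]) :
    invariantPairing n (p₁ - p₂) q = invariantPairing n p₁ q - invariantPairing n p₂ q := by
  simp only [invariantPairing, ← sum_sub_distrib, coeff_sub]
  exact sum_congr rfl fun _ _ ↦ by ring

theorem invariantPairing_add_right (n : ℕ) (p q₁ q₂ : K[X]) :
    invariantPairing n p (q₁ + q₂) = invariantPairing n p q₁ + invariantPairing n p q₂ := by
  simp only [invariantPairing, ← sum_add_distrib, coeff_add]
  exact sum_congr rfl fun _ _ ↦ by ring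

noncomputable def lowering (b : K) (n : ℕ) (q : K[X]) : K[X] :=
  C (n : K) * q - (X - C b) * derivative q

theorem lowering_X_sub_C_pow_mul_X_sub_C_pow (a b : K) {n u v : ℕ} (huv : u + v = n) :
    lowering b n ((X - C a) ^ u * (X - C b) ^ v) =
      C (u * (b - a)) * ((X - C a) ^ (u - 1) * (X - C b) ^ v) := by
  subst huv
  rcases u with _ | u <;> rcases v with _ | v <;>
    simp [lowering, derivative_mul, derivative_pow] <;> ring

variable [CharZero K]

theorem invariantPairing_X_sub_C_pow_left (a : K) {n : ℕ} {q : K[X]} (hq : q.natDegree ≤ n) :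
    invariantPairing n ((X - C a) ^ n) q = (-1) ^ n * q.eval a := by
  rw [invariantPairing, eval_eq_sum_range' (Nat.lt_succ_of_le hq), mul_sum, ← sum_range_reflect]
  refine sum_congr rfl fun i hi ↦ ?_
  have hin : i ≤ n := Nat.lt_succ_iff.mp (mem_range.mp hi)
  have hchoose : (n.choose (n - i) : K) ≠ 0 := by exact_mod_cast (Nat.choose_pos (n.sub_le i)).ne'
  rw [sub_eq_add_neg, ← C_neg, coeff_X_add_C_pow, Nat.add_sub_cancel, Nat.sub_sub_self hin]
  have hsign : (-1 : K) ^ (n - i) * (-1) ^ i = (-1) ^ n := by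
    rw [← pow_add, Nat.sub_add_cancel hin]
  field_simp
  rw [neg_pow a]
  linear_combination a ^ i * q.coeff i * hsign

theorem invariantPairing_succ_of_coeff_eq_zero {n : ℕ} {p : K[X]} (hp : p.coeff (n + 1) = 0)
    (q : K[X]) :
    invariantPairing (n + 1) p q = ((n : K) + 1)⁻¹ * invariantPairing n p (derivative q) := by
  rw [invariantPairing, sum_range_succ, hp, invariantPairing, mul_sum]
  simp only [mul_zero, zero_mul, zero_div, add_zero]
  refine sum_congr rfl fun i hi ↦ ?_
  have hin : i ≤ n := Nat.lt_succ_iff.mp (mem_range.mp hi)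
  rw [coeff_derivative, show n - i + 1 = n + 1 - i by omega]
  have hc₁ : (n.choose i : K) ≠ 0 := by exact_mod_cast (Nat.choose_pos hin).ne'
  have hc₂ : ((n + 1).choose i : K) ≠ 0 := by exact_mod_cast (Nat.choose_pos (by omega)).ne'
  have hn : (n : K) + 1 ≠ 0 := by exact_mod_cast n.succ_ne_zero
  have hchoose := congrArg (Nat.cast : ℕ → K) (Nat.choose_mul_succ_eq n i)
  push_cast [Nat.cast_sub (show i ≤ n + 1 by omega), Nat.cast_sub hin] at hchoose ⊢
  field_simp
  linear_combination p.coeff i * q.coeff (n + 1 - i) * hchoose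

theorem invariantPairing_succ_X_mul_left (n : ℕ) (p q : K[X]) :
    invariantPairing (n + 1) (X * p) q =
      -((n : K) + 1)⁻¹ * invariantPairing n p (C ((n : K) + 1) * q - X * derivative q) := by
  rw [invariantPairing, sum_range_succ', invariantPairing, mul_sum]
  simp only [coeff_X_mul_zero, mul_zero, zero_mul, zero_div, add_zero, coeff_X_mul]
  refine sum_congr rfl fun i hi ↦ ?_
  have hin : i ≤ n := Nat.lt_succ_iff.mp (mem_range.mp hi)
  obtain ⟨s, rfl⟩ : ∃ s, n = i + s := ⟨n - i, by omega⟩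
  rw [show i + s + 1 - (i + 1) = s by omega, show i + s - i = s by omega, coeff_sub,
    coeff_C_mul, coeff_X_mul_derivative]
  have hc₁ : ((i + s).choose i : K) ≠ 0 := by exact_mod_cast (Nat.choose_pos (by omega)).ne'
  have hc₂ : ((i + s + 1).choose (i + 1) : K) ≠ 0 := by
    exact_mod_cast (Nat.choose_pos (by omega)).ne'
  have hn : ((i + s : ℕ) : K) + 1 ≠ 0 := by exact_mod_cast (i + s).succ_ne_zero
  have hchoose := congrArg (Nat.cast : ℕ → K) (Nat.add_one_mul_choose_eq (i + s) i)
  push_cast at hn hchoose ⊢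
  field_simp
  linear_combination -(-1) ^ i * p.coeff i * q.coeff s * hchoose

theorem invariantPairing_succ_X_sub_C_mul_left (b : K) {n : ℕ} {p : K[X]}
    (hp : p.coeff (n + 1) = 0) (q : K[X]) :
    invariantPairing (n + 1) ((X - C b) * p) q =
      -((n : K) + 1)⁻¹ * invariantPairing n p (lowering b (n + 1) q) := by
  have hsplit : lowering b (n + 1) q =
      (C ((n : K) + 1) * q - X * derivative q) + C b * derivative q := by
    rw [lowering]; push_cast; ring
  rw [sub_mul, invariantPairing_sub_left, invariantPairing_C_mul_left,
    invariantPairing_succ_X_mul_left, invariantPairing_succ_of_coeff_eq_zero hp, hsplit,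
    invariantPairing_add_right, invariantPairing_C_mul_right]
  ring

theorem invariantPairing_X_sub_C_pow_mul_X_sub_C_pow (a b : K) (m t : ℕ) {u v : ℕ}
    (huv : u + v = m + t) :
    invariantPairing (m + t) ((X - C a) ^ m * (X - C b) ^ t) ((X - C a) ^ u * (X - C b) ^ v) =
      if u = t then (-1) ^ m * (a - b) ^ (m + t) * (m ! * t ! / (m + t)! : K) else 0 := by
  induction t generalizing u v with
  | zero =>
    have hdeg : ((X - C a) ^ u * (X - C b) ^ v).natDegree ≤ m := by
      refine natDegree_mul_le.trans ?_
      simp only [natDegree_pow, natDegree_X_sub_C]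
      omega
    rw [pow_zero, mul_one, add_zero, invariantPairing_X_sub_C_pow_left a hdeg]
    rcases u with _ | u
    · obtain rfl : m = v := by omega
      simp [Nat.factorial_ne_zero]
    · simp
  | succ t ih =>
    have hdeg : ((X - C a) ^ m * (X - C b) ^ t).coeff (m + t + 1) = 0 := by
      refine coeff_eq_zero_of_natDegree_lt (natDegree_mul_le.trans_lt ?_)
      simp only [natDegree_pow, natDegree_X_sub_C]
      omega
    rw [pow_succ, mul_comm _ (X - C b), mul_left_comm, ← add_assoc,
      invariantPairing_succ_X_sub_C_mul_left b hdeg,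
      lowering_X_sub_C_pow_mul_X_sub_C_pow a b (by omega : u + v = m + t + 1),
      invariantPairing_C_mul_right]
    rcases u with _ | u
    · simp
    · rw [Nat.add_sub_cancel, ih (by omega)]
      by_cases hut : u = t
      · subst hut
        have hfact : ((m + u)! : K) ≠ 0 := by exact_mod_cast Nat.factorial_ne_zero _
        rw [if_pos rfl, if_pos rfl, Nat.factorial_succ (m + u), Nat.factorial_succ u]
        push_cast
        field_simp
        ring
      · rw [if_neg hut, if_neg (by omega), mul_zero, mul_zero]

theorem pairV_eq_invariantPairing {k : ℕ} (hk : 1 ≤ k) (p q : ℂ[X]) :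
    pairV k p q = invariantPairing (2 * k - 2) p q := by
  rw [pairV, invariantPairing, show 2 * k - 1 = 2 * k - 2 + 1 by omega]

theorem Ppoly_eq_C_mul {k : ℕ} {z : ℂ} {l : ℤ} {m t : ℕ} (hm : (m : ℤ) = k - 1 - l)
    (ht : (t : ℤ) = k - 1 + l) :
    Ppoly k z l = C ((-1) ^ l * (k - 1)! / m ! * (z - conj z)⁻¹ ^ t) *
      ((X - C z) ^ m * (X - C (conj z)) ^ t) := by
  rw [Ppoly, show ((k : ℤ) - l - 1).toNat = m by omega,
    show ((k : ℤ) - 1 - l).toNat = m by omega,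
    show ((k : ℤ) - 1 + l).toNat = t by omega, mul_pow, ← C_pow, C_mul]
  ring

theorem statement7_general (k : ℕ) (z : ℂ) (hz : z ≠ conj z) (i j : ℤ)
    (hi1 : -((k : ℤ) - 1) ≤ i) (hi2 : i ≤ (k : ℤ) - 1)
    (hj1 : -((k : ℤ) - 1) ≤ j) (hj2 : j ≤ (k : ℤ) - 1) :
    (i + j ≠ 0 → pairV k (Ppoly k z i) (Ppoly k z j) = 0) ∧
    pairV k (Ppoly k z i) (Ppoly k z (-i)) =
      (-1 : ℂ) ^ ((k : ℤ) - 1 - i) * ((Nat.choose (2 * k - 2) (k - 1) : ℂ))⁻¹ := by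
  obtain ⟨m, hm⟩ := Int.eq_ofNat_of_zero_le (by omega : 0 ≤ (k : ℤ) - 1 - i)
  obtain ⟨t, ht⟩ := Int.eq_ofNat_of_zero_le (by omega : 0 ≤ (k : ℤ) - 1 + i)
  have hmt : 2 * k - 2 = m + t := by omega
  simp only [pairV_eq_invariantPairing (by omega : 1 ≤ k), hmt, Ppoly_eq_C_mul hm.symm ht.symm]
  constructor
  · intro hij
    obtain ⟨m', hm'⟩ := Int.eq_ofNat_of_zero_le (by omega : 0 ≤ (k : ℤ) - 1 - j)
    obtain ⟨t', ht'⟩ := Int.eq_ofNat_of_zero_le (by omega : 0 ≤ (k : ℤ) - 1 + j)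
    rw [Ppoly_eq_C_mul hm'.symm ht'.symm, invariantPairing_C_mul_left, invariantPairing_C_mul_right,
      invariantPairing_X_sub_C_pow_mul_X_sub_C_pow _ _ _ _ (by omega), if_neg (by omega),
      mul_zero, mul_zero]
  · rw [Ppoly_eq_C_mul (m := t) (t := m) (by omega) (by omega), invariantPairing_C_mul_left,
      invariantPairing_C_mul_right, invariantPairing_X_sub_C_pow_mul_X_sub_C_pow _ _ _ _ (by omega),
      if_pos rfl, hm, zpow_natCast, Nat.cast_choose ℂ (by omega : k - 1 ≤ m + t),
      show m + t - (k - 1) = k - 1 by omega, zpow_neg, inv_pow, inv_pow, pow_add]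
    have hzz : z - conj z ≠ 0 := sub_ne_zero.mpr hz
    have hm_fact : (m ! : ℂ) ≠ 0 := by exact_mod_cast m.factorial_ne_zero
    have ht_fact : (t ! : ℂ) ≠ 0 := by exact_mod_cast t.factorial_ne_zero
    field_simp

/-- `(P_i, P_j) = 0` for `i + j ≠ 0`, and
`(P_i, P_{−i}) = (−1)^{k−1−i} C(2k−2, k−1)⁻¹`. -/
theorem statement7 (k : ℕ) (hk : 1 ≤ k) (z : ℂ) (hz : z ≠ conj z) (i j : ℤ)
    (hi1 : -((k : ℤ) - 1) ≤ i) (hi2 : i ≤ (k : ℤ) - 1)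
    (hj1 : -((k : ℤ) - 1) ≤ j) (hj2 : j ≤ (k : ℤ) - 1) :
    (i + j ≠ 0 → pairV k (Ppoly k z i) (Ppoly k z j) = 0) ∧
    pairV k (Ppoly k z i) (Ppoly k z (-i)) =
      (-1 : ℂ) ^ ((k : ℤ) - 1 - i) * ((Nat.choose (2 * k - 2) (k - 1) : ℂ))⁻¹ :=
  statement7_general k z hz i j hi1 hi2 hj1 hj2
end

section
/- Let k ≥ 1, and let z₀, w₀ be distinct complex numbers, X a formal parameter. The coefficient of (z−z₀)^{−1} in the Laurent expansion at z = z₀ of the function (X−z)^{2k−2} (z₀−w₀)^k / ((z−z₀)^k (z−w₀)^k) equals (−1)^{k−1} C(2k−2, k−1) ((X−z₀)(X−w₀)/(z₀−w₀))^{k−1}. -/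
open Nat

/-!
Write the function as `F z / (z - z₀) ^ k` with
`F z = (z₀ - w₀) ^ k (X - z) ^ (2n) (z - w₀) ^ (-k)`, `n = k - 1`. By Leibniz, the `n`-th Taylor coefficient of `F` at `z₀` is a convolution of the Taylor
coefficients of `(X - z) ^ (2n)` and `(z - w₀) ^ (-k)`, both binomial. The identity
`C(2n, j) C(2n - j, n - j) = C(2n, n) C(n, j)` turns this convolution into `C(2n, n)` times the
binomial expansion of `((z₀ - w₀) + (X - z₀)) ^ n = (X - w₀) ^ n`.
-/

theorem Nat.choose_two_mul_mul_choose {n j : ℕ} (hjn : j ≤ n) :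
    (2 * n).choose n * n.choose j = (2 * n).choose j * (n + (n - j)).choose (n - j) := by
  rw [choose_mul hjn, show 2 * n - j = n + (n - j) by omega]

section

variable {𝕜 : Type*} [NontriviallyNormedField 𝕜] [CharZero 𝕜]

theorem iteratedDeriv_const_sub_pow_div_factorial (a z : 𝕜) (m j : ℕ) :
    iteratedDeriv j (fun z => (a - z) ^ m) z / j ! = (-1) ^ j * m.choose j * (a - z) ^ (m - j) := by
  rw [iteratedDeriv_comp_const_sub j (· ^ m) a]
  beta_reduce
  rw [iteratedDeriv_pow, descFactorial_eq_factorial_mul_choose]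
  field_simp [cast_ne_zero.2 j.factorial_ne_zero]
  push_cast
  ring

theorem iteratedDeriv_inv_sub_pow_div_factorial (b z : 𝕜) (m j : ℕ) :
    iteratedDeriv j (fun z => ((z - b) ^ (m + 1))⁻¹) z / j ! =
      (-1) ^ j * (m + j).choose j * ((z - b) ^ (m + 1 + j))⁻¹ := by
  have hzpow : (fun x : 𝕜 => (x ^ (m + 1))⁻¹) = fun x => x ^ (-(m + 1 : ℕ) : ℤ) := by
    funext x; rw [zpow_neg, zpow_natCast]
  have hprod : ∏ i ∈ Finset.range j, (((-(m + 1 : ℕ) : ℤ) : 𝕜) - i) =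
      (-1) ^ j * (m + 1).ascFactorial j := by
    have hneg := Finset.prod_neg (s := Finset.range j) fun i => ((m + 1 + i : ℕ) : 𝕜)
    rw [Finset.card_range] at hneg
    rw [ascFactorial_eq_prod_range, cast_prod, ← hneg]
    exact Finset.prod_congr rfl fun i _ => by push_cast; ring
  rw [iteratedDeriv_comp_sub_const j (fun x => (x ^ (m + 1))⁻¹) b]
  beta_reduce
  rw [hzpow, iteratedDeriv_eq_iterate, iter_deriv_zpow, hprod,
    ascFactorial_eq_factorial_mul_choose,
    show (-(m + 1 : ℕ) : ℤ) - j = -(m + 1 + j : ℕ) by push_cast; ring, zpow_neg, zpow_natCast]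
  field_simp [cast_ne_zero.2 j.factorial_ne_zero]
  push_cast
  ring

theorem iteratedDeriv_fun_mul_div_factorial {f g : 𝕜 → 𝕜} {x : 𝕜} {n : ℕ}
    (hf : ContDiffAt 𝕜 n f x) (hg : ContDiffAt 𝕜 n g x) :
    iteratedDeriv n (fun x => f x * g x) x / n ! = ∑ j ∈ Finset.range (n + 1),
      iteratedDeriv j f x / j ! * (iteratedDeriv (n - j) g x / (n - j)!) := by
  rw [iteratedDeriv_fun_mul hf hg, Finset.sum_div]
  refine Finset.sum_congr rfl fun j hj => ?_
  have hjn := Finset.mem_range_succ_iff.mp hj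
  have h : (n.choose j : 𝕜) * j ! * (n - j)! = n ! := by
    exact_mod_cast choose_mul_factorial_mul_factorial hjn
  rw [← h]
  field_simp [cast_ne_zero.2 (choose_pos hjn).ne', cast_ne_zero.2 j.factorial_ne_zero,
    cast_ne_zero.2 (n - j).factorial_ne_zero]

theorem iteratedDeriv_residue_numerator_div_factorial (n : ℕ) {z₀ w₀ : 𝕜} (hne : z₀ ≠ w₀) (X : 𝕜) :
    iteratedDeriv n
        (fun z => (z₀ - w₀) ^ (n + 1) * ((X - z) ^ (2 * n) * ((z - w₀) ^ (n + 1))⁻¹)) z₀ / n ! =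
      (-1) ^ n * (2 * n).choose n * ((X - z₀) * (X - w₀) / (z₀ - w₀)) ^ n := by
  have hc : z₀ - w₀ ≠ 0 := sub_ne_zero.2 hne
  have hinv : ContDiffAt 𝕜 n (fun z => ((z - w₀) ^ (n + 1))⁻¹) z₀ := by
    fun_prop (disch := exact pow_ne_zero _ hc)
  rw [iteratedDeriv_const_mul_field, mul_div_assoc,
    iteratedDeriv_fun_mul_div_factorial (by fun_prop) hinv]
  simp only [iteratedDeriv_const_sub_pow_div_factorial, iteratedDeriv_inv_sub_pow_div_factorial]
  have hterm : ∀ j ∈ Finset.range (n + 1),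
      (z₀ - w₀) ^ (n + 1) * ((-1) ^ j * ((2 * n).choose j : 𝕜) * (X - z₀) ^ (2 * n - j) *
        ((-1) ^ (n - j) * ((n + (n - j)).choose (n - j) : 𝕜) *
          ((z₀ - w₀) ^ (n + 1 + (n - j)))⁻¹)) =
      (-1) ^ n * (2 * n).choose n * ((X - z₀) ^ n / (z₀ - w₀) ^ n) *
        ((z₀ - w₀) ^ j * (X - z₀) ^ (n - j) * n.choose j) := by
    intro j hj
    have hjn := Finset.mem_range_succ_iff.mp hj
    have hchoose : ((2 * n).choose n * n.choose j : 𝕜) =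
        (2 * n).choose j * (n + (n - j)).choose (n - j) := by
      exact_mod_cast choose_two_mul_mul_choose hjn
    calc _ = ((2 * n).choose j * (n + (n - j)).choose (n - j) : 𝕜) *
          ((-1) ^ n * ((X - z₀) ^ n / (z₀ - w₀) ^ n) * ((z₀ - w₀) ^ j * (X - z₀) ^ (n - j))) := by
          obtain ⟨i, rfl⟩ := Nat.exists_eq_add_of_le hjn
          rw [Nat.add_sub_cancel_left, show 2 * (j + i) - j = j + i + i by omega]
          field_simp
          ring
      _ = _ := by rw [← hchoose]; ring
  rw [Finset.mul_sum, Finset.sum_congr rfl hterm, ← Finset.mul_sum, ← add_pow,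
    show z₀ - w₀ + (X - z₀) = X - w₀ by ring, div_pow, mul_pow]
  field_simp

end

/-- the coefficient of `(z−z₀)^{−1}` in the Laurent expansion at `z₀` of
`(X−z)^{2k−2} (z₀−w₀)^k / ((z−z₀)^k (z−w₀)^k)` equals
`(−1)^{k−1} C(2k−2, k−1) ((X−z₀)(X−w₀)/(z₀−w₀))^{k−1}`.

The function is written as `F(z)/(z−z₀)^k` with `F` analytic at `z₀`; the coefficient of
`(z−z₀)^{−1}` is then the `(k−1)`-st Taylor coefficient of `F` at `z₀`. -/
theorem statement10 (k : ℕ) (hk : 1 ≤ k) (z₀ w₀ X : ℂ) (hne : z₀ ≠ w₀) :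
    ∃ F : ℂ → ℂ, AnalyticAt ℂ F z₀ ∧
      (∀ᶠ z in nhdsWithin z₀ {z₀}ᶜ,
        (X - z) ^ (2 * k - 2) * (z₀ - w₀) ^ k / ((z - z₀) ^ k * (z - w₀) ^ k) =
          F z / (z - z₀) ^ k) ∧
      iteratedDeriv (k - 1) F z₀ / ((k - 1).factorial : ℂ) =
        (-1 : ℂ) ^ (k - 1) * (Nat.choose (2 * k - 2) (k - 1) : ℂ) *
          ((X - z₀) * (X - w₀) / (z₀ - w₀)) ^ (k - 1) := by
  obtain ⟨n, rfl⟩ : ∃ n, k = n + 1 := ⟨k - 1, by omega⟩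
  rw [show 2 * (n + 1) - 2 = 2 * n by omega, Nat.add_sub_cancel]
  have hc : (z₀ - w₀) ^ (n + 1) ≠ 0 := pow_ne_zero _ (sub_ne_zero.2 hne)
  refine ⟨fun z => (z₀ - w₀) ^ (n + 1) * ((X - z) ^ (2 * n) * ((z - w₀) ^ (n + 1))⁻¹),
    by fun_prop (disch := exact hc), ?_, iteratedDeriv_residue_numerator_div_factorial n hne X⟩
  -- with `x / 0 = 0` the two sides agree at every `z`, poles included
  exact .of_forall fun z => by simp only [div_eq_mul_inv, mul_inv]; ring
end
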